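/- Let W^1, …, W^{L−1} be matrices with W^ℓ ∈ ℝ^{N_{ℓ+1}×N_ℓ} and let w^L ∈ ℝ^{N_L} be a nonzero vector, satisfying the exact balance conditions W^ℓ W^{ℓ⊤} = W^{(ℓ+1)⊤} W^{ℓ+1} for ℓ = 1,…,L−2 and W^{L−1} W^{(L−1)⊤} = w^L w^{L⊤}. Then with u := ‖w^L‖₂ > 0 there exist unit vectors r_1 ∈ ℝ^{N_1}, …, r_L ∈ ℝ^{N_L} such that w^L = u r_L and W^ℓ = u r_{ℓ+1} r_ℓᵀ for every ℓ = 1,…,L−1; in particular every weight matrix is rank one with a common singular value u. -/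

import Mathlib

/-!
If `M Mᵀ = u² v vᵀ` with `v` a unit vector and `u > 0`, then `(1 - v vᵀ) M` has zero Gram matrix,
so `M = v vᵀ M = u v wᵀ` with `w = u⁻¹ Mᵀ v`, again a unit vector, and `Mᵀ M = u² w wᵀ`. The top
layer is a row vector with `w^L w^Lᵀ = u²`, and each balance condition hands the rank-one Gram
matrix `u² r_{ℓ+1} r_{ℓ+1}ᵀ` of one layer down to the next, so induction down the chain factors
every layer with the same `u`.
-/

open Matrix

noncomputable def euclNorm {m : ℕ} (v : Fin m → ℝ) : ℝ :=
  Real.sqrt (∑ i, v i ^ 2)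

lemma euclNorm_eq_one_iff {m : ℕ} (v : Fin m → ℝ) : euclNorm v = 1 ↔ v ⬝ᵥ v = 1 := by
  simp only [euclNorm, Real.sqrt_eq_one, dotProduct, sq]

namespace Matrix

variable {R ι κ : Type*} [CommRing R] [Fintype ι]

lemma vecMulVec_mul_self_of_dotProduct_self_eq_one {v : ι → R} (hv : v ⬝ᵥ v = 1) :
    vecMulVec v v * vecMulVec v v = vecMulVec v v := by
  rw [vecMulVec_mul_vecMulVec, hv, one_smul]

lemma transpose_mul_self_smul_vecMulVec {x : ι → R} (hx : x ⬝ᵥ x = 1) (u : R) (y : κ → R) :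
    (u • vecMulVec x y)ᵀ * (u • vecMulVec x y) = u ^ 2 • vecMulVec y y := by
  rw [transpose_smul, transpose_vecMulVec, Matrix.smul_mul, Matrix.mul_smul,
    vecMulVec_mul_vecMulVec, hx, one_smul, smul_smul, sq]

variable [Fintype κ]

lemma mul_transpose_self_of_subsingleton [Subsingleton ι] (M : Matrix ι κ R) :
    M * Mᵀ = (∑ i, ∑ j, M i j ^ 2) • vecMulVec 1 1 := by
  ext i i'
  obtain rfl := Subsingleton.elim i i'
  simp [mul_apply, Fintype.sum_subsingleton _ i, sq]

lemma dotProduct_self_vecMul_of_mul_transpose_eq {M : Matrix ι κ R} {v : ι → R} {c : R}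
    (hv : v ⬝ᵥ v = 1) (hM : M * Mᵀ = c • vecMulVec v v) : (v ᵥ* M) ⬝ᵥ (v ᵥ* M) = c := by
  rw [← dotProduct_mulVec, ← mulVec_transpose, mulVec_mulVec, hM, smul_mulVec, vecMulVec_mulVec]
  simp [hv]

lemma sum_sum_sq_pos_of_ne_zero {M : Matrix ι κ ℝ} (hM : M ≠ 0) :
    0 < ∑ i, ∑ j, M i j ^ 2 := by
  obtain ⟨i, j, hij⟩ : ∃ i j, M i j ≠ 0 := by
    by_contra! h
    exact hM (ext h)
  exact Finset.sum_pos' (fun _ _ => by positivity)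
    ⟨i, Finset.mem_univ i, Finset.sum_pos' (fun _ _ => by positivity)
      ⟨j, Finset.mem_univ j, by positivity⟩⟩

/-- `P = v vᵀ` is an orthogonal projection with `((1 - P) M) ((1 - P) M)ᵀ = c (1 - P) P (1 - P) = 0`,
so `M = P M`. -/
lemma eq_vecMulVec_vecMul_of_mul_transpose_eq {M : Matrix ι κ ℝ} {v : ι → ℝ} {c : ℝ}
    (hv : v ⬝ᵥ v = 1) (hM : M * Mᵀ = c • vecMulVec v v) : M = vecMulVec v (v ᵥ* M) := by
  classical
  set P := vecMulVec v v
  have hP : P * P = P := vecMulVec_mul_self_of_dotProduct_self_eq_one hv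
  have hE : ((1 - P) * M) * ((1 - P) * M)ᵀ = 0 := by
    rw [transpose_mul, ← Matrix.mul_assoc, Matrix.mul_assoc (1 - P), hM, Matrix.mul_smul, sub_mul,
      one_mul, hP, sub_self, smul_zero, zero_mul]
  rw [← conjTranspose_eq_transpose_of_trivial, self_mul_conjTranspose_eq_zero,
    Matrix.sub_mul, Matrix.one_mul, sub_eq_zero] at hE
  rwa [← vecMulVec_mul]

lemma eq_smul_vecMulVec_of_mul_transpose_eq {M : Matrix ι κ ℝ} {v : ι → ℝ} {u : ℝ}
    (hu : 0 < u) (hv : v ⬝ᵥ v = 1) (hM : M * Mᵀ = u ^ 2 • vecMulVec v v) :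
    (u⁻¹ • (v ᵥ* M)) ⬝ᵥ (u⁻¹ • (v ᵥ* M)) = 1 ∧ M = u • vecMulVec v (u⁻¹ • (v ᵥ* M)) := by
  constructor
  · rw [smul_dotProduct, dotProduct_smul, dotProduct_self_vecMul_of_mul_transpose_eq hv hM,
      smul_eq_mul, smul_eq_mul]
    field_simp
  · rw [vecMulVec_smul, smul_smul, mul_inv_cancel₀ hu.ne', one_smul]
    exact eq_vecMulVec_vecMul_of_mul_transpose_eq hv hM

end Matrix

section BalancedChain

variable {n : ℕ → ℕ} {L : ℕ} (A : ∀ ℓ : Fin L, Matrix (Fin (n (ℓ + 1))) (Fin (n ℓ)) ℝ)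
  (u : ℝ) (v : (k : ℕ) → Fin (n k) → ℝ)

/-- Only `v L` enters `singularVec A u v k` for `k ≤ L`; the values `v k` with `k > L` merely fill in
indices beyond the chain. -/
noncomputable def singularVec (k : ℕ) : Fin (n k) → ℝ :=
  if h : k < L then u⁻¹ • (singularVec (k + 1) ᵥ* A ⟨k, h⟩) else v k
termination_by L - k

lemma singularVec_of_lt {k : ℕ} (h : k < L) :
    singularVec A u v k = u⁻¹ • (singularVec A u v (k + 1) ᵥ* A ⟨k, h⟩) := by
  rw [singularVec, dif_pos h]

lemma singularVec_of_le {k : ℕ} (h : L ≤ k) : singularVec A u v k = v k := by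
  rw [singularVec, dif_neg h.not_gt]

lemma singularVec_layer (hu : 0 < u) {k : ℕ} (hk : k < L)
    (hr : singularVec A u v (k + 1) ⬝ᵥ singularVec A u v (k + 1) = 1)
    (hgram : A ⟨k, hk⟩ * (A ⟨k, hk⟩)ᵀ
      = u ^ 2 • vecMulVec (singularVec A u v (k + 1)) (singularVec A u v (k + 1))) :
    singularVec A u v k ⬝ᵥ singularVec A u v k = 1 ∧
      A ⟨k, hk⟩ = u • vecMulVec (singularVec A u v (k + 1)) (singularVec A u v k) := by
  rw [singularVec_of_lt A u v hk]
  exact eq_smul_vecMulVec_of_mul_transpose_eq hu hr hgram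

end BalancedChain

theorem balanced_chain_eq_smul_vecMulVec {n : ℕ → ℕ} {m : ℕ}
    (A : ∀ ℓ : Fin (m + 1), Matrix (Fin (n (ℓ + 1))) (Fin (n ℓ)) ℝ) {u : ℝ}
    (v : (k : ℕ) → Fin (n k) → ℝ) (hu : 0 < u)
    (hbal : ∀ (ℓ : ℕ) (hℓ : ℓ + 1 < m + 1),
      A ⟨ℓ, Nat.lt_of_succ_lt hℓ⟩ * (A ⟨ℓ, Nat.lt_of_succ_lt hℓ⟩)ᵀ
        = (A ⟨ℓ + 1, hℓ⟩)ᵀ * A ⟨ℓ + 1, hℓ⟩)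
    (hv : v (m + 1) ⬝ᵥ v (m + 1) = 1)
    (htop : A (Fin.last m) * (A (Fin.last m))ᵀ = u ^ 2 • vecMulVec (v (m + 1)) (v (m + 1))) :
    (∀ k ≤ m + 1, singularVec A u v k ⬝ᵥ singularVec A u v k = 1) ∧
      ∀ ℓ : Fin (m + 1), A ℓ = u • vecMulVec (singularVec A u v (ℓ + 1)) (singularVec A u v ℓ) := by
  set r := singularVec A u v
  have hr_top : r (m + 1) = v (m + 1) := singularVec_of_le A u v le_rfl
  have gram : ∀ k (hk : k ≤ m), r (k + 1) ⬝ᵥ r (k + 1) = 1 ∧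
      A ⟨k, Nat.lt_succ_of_le hk⟩ * (A ⟨k, Nat.lt_succ_of_le hk⟩)ᵀ
        = u ^ 2 • vecMulVec (r (k + 1)) (r (k + 1)) := by
    intro k hk
    induction hk using Nat.decreasingInduction with
    | self => exact hr_top ▸ ⟨hv, htop⟩
    | of_succ k hk ih =>
      obtain ⟨hunit, hfac⟩ := singularVec_layer A u v hu (Nat.succ_lt_succ hk) ih.1 ih.2
      refine ⟨hunit, ?_⟩
      rw [hbal k (Nat.succ_lt_succ hk), hfac, transpose_mul_self_smul_vecMulVec ih.1]
  refine ⟨fun k hk => ?_, fun ℓ => ?_⟩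
  · rcases hk.eq_or_lt with rfl | hk
    · exact hr_top ▸ hv
    · obtain ⟨hr, hA⟩ := gram k (Nat.le_of_lt_succ hk)
      exact (singularVec_layer A u v hu hk hr hA).1
  · obtain ⟨hr, hA⟩ := gram ℓ (Nat.le_of_lt_succ ℓ.isLt)
    exact (singularVec_layer A u v hu ℓ.isLt hr hA).2

/-- A deep linear network `f(x) = w^{L⊤} W^{L-1} ⋯ W^1 x` is encoded as a chain
of `L` matrices `A 0, …, A (L-1)` with widths `n 0, …, n L` and `n L = 1`, the last matrix
being the row vector `w^{L⊤}`. If the exact balance conditions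
`A ℓ (A ℓ)ᵀ = (A (ℓ+1))ᵀ A (ℓ+1)` hold for all adjacent pairs (this includes the condition
`W^{L-1} W^{(L-1)⊤} = w^L w^{L⊤}`) and the top vector `w^L` is nonzero, then with
`u := ‖w^L‖₂ > 0` there exist unit vectors `r k ∈ ℝ^{n k}` such that (with the top unit
"vector" normalized to `1`, i.e. `w^L = u r_L`) every weight matrix is the rank-one matrix
`A ℓ = u r_{ℓ+1} r_ℓᵀ` with common singular value `u`. -/
theorem stmt9 {L : ℕ} (hL : 0 < L) (n : ℕ → ℕ) (htop : n L = 1)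
    (A : ∀ ℓ : Fin L, Matrix (Fin (n (ℓ + 1))) (Fin (n ℓ)) ℝ)
    (hbal : ∀ (ℓ : ℕ) (hℓ : ℓ + 1 < L),
      A ⟨ℓ, Nat.lt_of_succ_lt hℓ⟩ * (A ⟨ℓ, Nat.lt_of_succ_lt hℓ⟩)ᵀ
        = (A ⟨ℓ + 1, hℓ⟩)ᵀ * A ⟨ℓ + 1, hℓ⟩)
    (hw : A ⟨L - 1, Nat.sub_lt hL one_pos⟩ ≠ 0)
    (u : ℝ)
    (hu : u = Real.sqrt (∑ i, ∑ j, (A ⟨L - 1, Nat.sub_lt hL one_pos⟩ i j) ^ 2)) :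
    0 < u ∧
    ∃ r : (k : ℕ) → Fin (n k) → ℝ,
      (∀ k ≤ L, euclNorm (r k) = 1) ∧
      (∀ i, r L i = 1) ∧
      (∀ ℓ : Fin L, A ℓ = u • vecMulVec (r (ℓ + 1)) (r ℓ)) := by
  obtain ⟨m, rfl⟩ := Nat.exists_eq_add_one_of_ne_zero hL.ne'
  change A (Fin.last m) ≠ 0 at hw
  change u = Real.sqrt (∑ i, ∑ j, A (Fin.last m) i j ^ 2) at hu
  have hsq := sum_sum_sq_pos_of_ne_zero hw
  have hupos : 0 < u := hu ▸ Real.sqrt_pos.2 hsq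
  have : Subsingleton (Fin (n (Fin.last m + 1))) := by rw [Fin.val_last, htop]; infer_instance
  have hgram : A (Fin.last m) * (A (Fin.last m))ᵀ = u ^ 2 • vecMulVec 1 1 := by
    rw [mul_transpose_self_of_subsingleton, hu, Real.sq_sqrt hsq.le]
  obtain ⟨hunit, hfac⟩ :=
    balanced_chain_eq_smul_vecMulVec A 1 hupos hbal (by simp [htop]) hgram
  refine ⟨hupos, singularVec A u 1, fun k hk => (euclNorm_eq_one_iff _).2 (hunit k hk),
    fun i => ?_, hfac⟩
  rw [singularVec_of_le A u 1 le_rfl]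
  rfl
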